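/- Let 0 < a < b, 1 < σ ≤ 2, λ ∈ ℝ with |λ| < σ^{σ+1}·Γ(σ)/((σ−1)^{σ−1}·(ln(b/a))^{σ}), and let G be the Green's function G(x,τ) = (1/Γ(σ))·[((ln(x/a)/ln(b/a))^{σ−1}·(ln(b/τ))^{σ−1} − (ln(x/τ))^{σ−1})/τ] for a ≤ τ ≤ x ≤ b, and G(x,τ) = (1/Γ(σ))·(ln(x/a)/ln(b/a))^{σ−1}·(ln(b/τ))^{σ−1}/τ for a ≤ x ≤ τ ≤ b. Then the only continuous function u : [a,b] → ℝ satisfying u(x) = λ·∫_a^b G(x,τ)·u(τ) dτ for all x ∈ [a,b] is u ≡ 0. -/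

import Mathlib

/-!
The Green's function is nonnegative, and splitting `∫ₐᵇ G(x, τ) dτ` at `τ = x` gives
`(ln (x/a))^(σ-1) · ln (b/x) / (σ Γ(σ))`. With `y = ln (x/a)` and `L = ln (b/a)` this is
`y^(σ-1) (L - y) / (σ Γ(σ))`, which weighted AM-GM bounds by
`C = (σ-1)^(σ-1) L^σ / (σ^(σ+1) Γ(σ))`. The hypothesis on `λ` says `|λ| C < 1`, so evaluating the
equation at a maximum point of `|u|` gives `max |u| ≤ |λ| C · max |u|`, whence `u = 0`.
-/

open Real Set MeasureTheory

lemma eq_zero_of_eq_mul_integral_kernel {a b lam C : ℝ} (hab : a ≤ b) {k : ℝ → ℝ → ℝ}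
    {u : ℝ → ℝ} (hu : ContinuousOn u (Icc a b))
    (hk_int : ∀ x ∈ Icc a b, IntervalIntegrable (k x) volume a b)
    (hk_nonneg : ∀ x ∈ Icc a b, ∀ τ ∈ Icc a b, 0 ≤ k x τ)
    (hk_le : ∀ x ∈ Icc a b, ∫ τ in a..b, k x τ ≤ C) (hlamC : |lam| * C < 1)
    (heq : ∀ x ∈ Icc a b, u x = lam * ∫ τ in a..b, k x τ * u τ) :
    ∀ x ∈ Icc a b, u x = 0 := by
  obtain ⟨x₀, hx₀, hmax⟩ := isCompact_Icc.exists_isMaxOn (nonempty_Icc.mpr hab) hu.abs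
  set M := |u x₀|
  have hM : ∀ τ ∈ Icc a b, |u τ| ≤ M := hmax
  have hM_le : M ≤ |lam| * C * M := calc
    M = |lam| * |∫ τ in a..b, k x₀ τ * u τ| := by rw [← abs_mul, ← heq x₀ hx₀]
    _ ≤ |lam| * ∫ τ in a..b, k x₀ τ * M := by
      refine mul_le_mul_of_nonneg_left (intervalIntegral.norm_integral_le_of_norm_le
        (f := fun τ => k x₀ τ * u τ) hab (Filter.Eventually.of_forall fun τ hτ => ?_)
        ((hk_int x₀ hx₀).mul_const M)) (abs_nonneg _)
      have hτ : τ ∈ Icc a b := Ioc_subset_Icc_self hτ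
      rw [Real.norm_eq_abs, abs_mul, abs_of_nonneg (hk_nonneg x₀ hx₀ τ hτ)]
      exact mul_le_mul_of_nonneg_left (hM τ hτ) (hk_nonneg x₀ hx₀ τ hτ)
    _ ≤ |lam| * C * M := by
      rw [intervalIntegral.integral_mul_const, mul_assoc]
      exact mul_le_mul_of_nonneg_left
        (mul_le_mul_of_nonneg_right (hk_le x₀ hx₀) (abs_nonneg _)) (abs_nonneg _)
  have hM0 : M = 0 := by nlinarith [abs_nonneg (u x₀)]
  exact fun x hx => abs_nonpos_iff.mp (hM0 ▸ hM x hx)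

lemma rpow_mul_sub_le {p y L : ℝ} (hp : 0 < p) (hy : 0 ≤ y) (hyL : y ≤ L) :
    y ^ p * (L - y) ≤ p ^ p * (L / (p + 1)) ^ (p + 1) := by
  have hp1 : 0 < p + 1 := by linarith
  have hLy : 0 ≤ L - y := by linarith
  -- weighted AM-GM for `y / p` (weight `p / (p + 1)`) and `L - y` (weight `1 / (p + 1)`)
  have hamgm := geom_mean_le_arith_mean2_weighted (w₁ := p / (p + 1)) (w₂ := 1 / (p + 1))
    (by positivity) (by positivity) (div_nonneg hy hp.le) hLy (by field_simp)
  have hmean : p / (p + 1) * (y / p) + 1 / (p + 1) * (L - y) = L / (p + 1) := by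
    field_simp; ring
  rw [hmean] at hamgm
  have hpow := rpow_le_rpow (by positivity) hamgm hp1.le
  rw [mul_rpow (by positivity) (by positivity), ← rpow_mul (div_nonneg hy hp.le),
    ← rpow_mul hLy, div_mul_cancel₀ _ hp1.ne', one_div_mul_cancel hp1.ne', rpow_one,
    div_rpow hy hp.le] at hpow
  calc y ^ p * (L - y) = p ^ p * (y ^ p / p ^ p * (L - y)) := by
        field_simp
    _ ≤ p ^ p * (L / (p + 1)) ^ (p + 1) := mul_le_mul_of_nonneg_left hpow (by positivity)

lemma continuousOn_log_max_rpow_div {c σ : ℝ} (hσ : 1 ≤ σ) :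
    ContinuousOn (fun τ => log (max (c / τ) 1) ^ (σ - 1) / τ) (Ioi 0) := by
  have hne : ∀ τ ∈ Ioi (0 : ℝ), τ ≠ 0 := fun τ hτ => ne_of_gt hτ
  refine ContinuousOn.div ?_ continuousOn_id hne
  refine ContinuousOn.rpow_const ?_ fun _ _ => Or.inr (by linarith)
  exact ((continuousOn_const.div continuousOn_id hne).sup continuousOn_const).log
    fun τ _ => by positivity

lemma continuousOn_log_div_rpow_div {c σ : ℝ} (hc : 0 < c) (hσ : 1 ≤ σ) :
    ContinuousOn (fun τ => log (c / τ) ^ (σ - 1) / τ) (Ioi 0) := by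
  have hne : ∀ τ ∈ Ioi (0 : ℝ), τ ≠ 0 := fun τ hτ => ne_of_gt hτ
  refine ContinuousOn.div ?_ continuousOn_id hne
  refine ContinuousOn.rpow_const ?_ fun _ _ => Or.inr (by linarith)
  exact (continuousOn_const.div continuousOn_id hne).log fun τ (hτ : 0 < τ) => (div_pos hc hτ).ne'

lemma integral_log_div_rpow_div {a c σ : ℝ} (ha : 0 < a) (hac : a ≤ c) (hσ : 1 ≤ σ) :
    ∫ τ in a..c, log (c / τ) ^ (σ - 1) / τ = log (c / a) ^ σ / σ := by
  have hpos : ∀ τ ∈ Icc a c, 0 < τ := fun τ hτ => ha.trans_le hτ.1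
  have hc : 0 < c := ha.trans_le hac
  have hcont : ContinuousOn (fun τ => log c - log τ) (Icc a c) :=
    continuousOn_const.sub (continuousOn_log.mono fun τ hτ => (hpos τ hτ).ne')
  calc ∫ τ in a..c, log (c / τ) ^ (σ - 1) / τ
      = ∫ τ in a..c, (log c - log τ) ^ (σ - 1) / τ := by
        refine intervalIntegral.integral_congr fun τ hτ => ?_
        rw [uIcc_of_le hac] at hτ
        rw [log_div hc.ne' (hpos τ hτ).ne']
    _ = -(log c - log c) ^ σ / σ - -(log c - log a) ^ σ / σ := by
        refine intervalIntegral.integral_eq_sub_of_hasDerivAt_of_le hac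
          ((hcont.rpow_const fun _ _ => Or.inr (by linarith)).neg.div_const σ) (fun τ hτ => ?_)
          (((hcont.rpow_const fun _ _ => Or.inr (by linarith)).div continuousOn_id
            fun τ hτ => (hpos τ hτ).ne').intervalIntegrable_of_Icc hac)
        have hτ0 : 0 < τ := ha.trans hτ.1
        have hlog : log c - log τ ≠ 0 := (sub_pos.2 (log_lt_log hτ0 hτ.2)).ne'
        refine ((((hasDerivAt_log hτ0.ne').const_sub (log c)).rpow_const
          (p := σ) (Or.inl hlog)).neg.div_const σ).congr_deriv ?_
        field_simp
    _ = log (c / a) ^ σ / σ := by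
        rw [sub_self, zero_rpow (by linarith), log_div hc.ne' ha.ne']
        ring

lemma integral_log_max_rpow_div {a b x σ : ℝ} (ha : 0 < a) (hx : x ∈ Icc a b) (hσ : 1 < σ) :
    ∫ τ in a..b, log (max (x / τ) 1) ^ (σ - 1) / τ = log (x / a) ^ σ / σ := by
  have hint : ∀ c d, a ≤ c → c ≤ d →
      IntervalIntegrable (fun τ => log (max (x / τ) 1) ^ (σ - 1) / τ) volume c d :=
    fun c d hc hcd => ((continuousOn_log_max_rpow_div hσ.le).mono
      fun τ hτ => ha.trans_le (hc.trans hτ.1)).intervalIntegrable_of_Icc hcd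
  rw [← intervalIntegral.integral_add_adjacent_intervals (hint a x le_rfl hx.1)
    (hint x b hx.1 hx.2), ← integral_log_div_rpow_div ha hx.1 hσ.le]
  have hleft : EqOn (fun τ => log (max (x / τ) 1) ^ (σ - 1) / τ)
      (fun τ => log (x / τ) ^ (σ - 1) / τ) (uIcc a x) := fun τ hτ => by
    rw [uIcc_of_le hx.1] at hτ
    dsimp only
    rw [max_eq_left ((one_le_div (ha.trans_le hτ.1)).2 hτ.2)]
  have hright : EqOn (fun τ => log (max (x / τ) 1) ^ (σ - 1) / τ) (fun _ => 0) (uIcc x b) :=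
    fun τ hτ => by
    rw [uIcc_of_le hx.2] at hτ
    have hτ0 : 0 < τ := ha.trans_le (hx.1.trans hτ.1)
    simp [max_eq_right ((div_le_one hτ0).2 hτ.1), zero_rpow (sub_ne_zero.2 hσ.ne')]
  rw [intervalIntegral.integral_congr hleft, intervalIntegral.integral_congr hright,
    intervalIntegral.integral_zero, add_zero]

noncomputable def hadamardGreen (a b σ x τ : ℝ) : ℝ :=
  if τ ≤ x then
    (1 / Gamma σ) *
      (((log (x / a) / log (b / a)) ^ (σ - 1) * (log (b / τ)) ^ (σ - 1)
        - (log (x / τ)) ^ (σ - 1)) / τ)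
  else
    (1 / Gamma σ) *
      ((log (x / a) / log (b / a)) ^ (σ - 1) * (log (b / τ)) ^ (σ - 1) / τ)

section hadamardGreen

variable {a b σ x τ : ℝ}

-- `log (max (x / τ) 1)` vanishes for `τ ≥ x`, so one formula covers both branches.
lemma hadamardGreen_eq (hσ : 1 < σ) (hτ : 0 < τ) :
    hadamardGreen a b σ x τ = (1 / Gamma σ) *
      ((log (x / a) / log (b / a)) ^ (σ - 1) * (log (b / τ) ^ (σ - 1) / τ)
        - log (max (x / τ) 1) ^ (σ - 1) / τ) := by
  unfold hadamardGreen
  split_ifs with h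
  · rw [max_eq_left ((one_le_div hτ).2 h)]
    ring
  · rw [max_eq_right ((div_le_one hτ).2 (not_le.1 h).le), log_one,
      zero_rpow (sub_ne_zero.2 hσ.ne')]
    ring

lemma continuousOn_hadamardGreen (hb : 0 < b) (hσ : 1 < σ) :
    ContinuousOn (hadamardGreen a b σ x) (Ioi 0) := by
  refine (continuousOn_const.mul ((continuousOn_const.mul
    (continuousOn_log_div_rpow_div hb hσ.le)).sub
    (continuousOn_log_max_rpow_div hσ.le))).congr fun τ hτ => hadamardGreen_eq hσ hτ

lemma hadamardGreen_nonneg (ha : 0 < a) (hab : a < b) (hσ : 1 < σ) (hx : x ∈ Icc a b)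
    (hτ : τ ∈ Icc a b) : 0 ≤ hadamardGreen a b σ x τ := by
  have hb : 0 < b := ha.trans hab
  have hτ0 : 0 < τ := ha.trans_le hτ.1
  have hx0 : 0 < x := ha.trans_le hx.1
  have hL : 0 < log (b / a) := log_pos ((one_lt_div ha).2 hab)
  have hX : 0 ≤ log (x / a) / log (b / a) :=
    div_nonneg (log_nonneg ((one_le_div ha).2 hx.1)) hL.le
  have hB : 0 ≤ log (b / τ) := log_nonneg ((one_le_div hτ0).2 hτ.2)
  unfold hadamardGreen
  split_ifs with h
  · refine mul_nonneg (by positivity) (div_nonneg (sub_nonneg.2 ?_) hτ0.le)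
    rw [← mul_rpow hX hB]
    refine rpow_le_rpow (log_nonneg ((one_le_div hτ0).2 h)) ?_ (by linarith)
    rw [div_mul_eq_mul_div, le_div_iff₀ hL, log_div hx0.ne' ha.ne', log_div hb.ne' hτ0.ne',
      log_div hx0.ne' hτ0.ne', log_div hb.ne' ha.ne']
    -- the difference of the two sides is `log (τ / a) * log (b / x)`
    nlinarith [mul_nonneg (sub_nonneg.2 (log_le_log ha hτ.1)) (sub_nonneg.2 (log_le_log hx0 hx.2))]
  · exact mul_nonneg (by positivity)
      (div_nonneg (mul_nonneg (rpow_nonneg hX _) (rpow_nonneg hB _)) hτ0.le)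

lemma integral_hadamardGreen (ha : 0 < a) (hab : a < b) (hσ : 1 < σ) (hx : x ∈ Icc a b) :
    ∫ τ in a..b, hadamardGreen a b σ x τ =
      log (x / a) ^ (σ - 1) * log (b / x) / (σ * Gamma σ) := by
  have hb : 0 < b := ha.trans hab
  have hx0 : 0 < x := ha.trans_le hx.1
  have hL : 0 < log (b / a) := log_pos ((one_lt_div ha).2 hab)
  have hX : 0 ≤ log (x / a) := log_nonneg ((one_le_div ha).2 hx.1)
  have hint : ∀ f : ℝ → ℝ, ContinuousOn f (Ioi 0) → IntervalIntegrable f volume a b :=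
    fun f hf => (hf.mono fun τ hτ => ha.trans_le hτ.1).intervalIntegrable_of_Icc hab.le
  have hLσ : log (b / a) ^ σ = log (b / a) ^ (σ - 1) * log (b / a) := by
    rw [← rpow_add_one hL.ne', sub_add_cancel]
  have hXσ : log (x / a) ^ σ = log (x / a) ^ (σ - 1) * log (x / a) := by
    rw [← rpow_add_one' hX (by linarith), sub_add_cancel]
  have hsplit : log (b / x) = log (b / a) - log (x / a) := by
    rw [log_div hb.ne' hx0.ne', log_div hb.ne' ha.ne', log_div hx0.ne' ha.ne']
    ring
  calc ∫ τ in a..b, hadamardGreen a b σ x τ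
      = ∫ τ in a..b, (1 / Gamma σ) *
          ((log (x / a) / log (b / a)) ^ (σ - 1) * (log (b / τ) ^ (σ - 1) / τ)
            - log (max (x / τ) 1) ^ (σ - 1) / τ) := by
        refine intervalIntegral.integral_congr fun τ hτ => hadamardGreen_eq hσ ?_
        rw [uIcc_of_le hab.le] at hτ
        exact ha.trans_le hτ.1
    _ = (1 / Gamma σ) * ((log (x / a) / log (b / a)) ^ (σ - 1) * (log (b / a) ^ σ / σ)
          - log (x / a) ^ σ / σ) := by
        rw [intervalIntegral.integral_const_mul, intervalIntegral.integral_sub,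
          intervalIntegral.integral_const_mul, integral_log_div_rpow_div ha hab.le hσ.le,
          integral_log_max_rpow_div ha hx hσ]
        · exact hint _ (continuousOn_const.mul (continuousOn_log_div_rpow_div hb hσ.le))
        · exact hint _ (continuousOn_log_max_rpow_div hσ.le)
    _ = log (x / a) ^ (σ - 1) * log (b / x) / (σ * Gamma σ) := by
        rw [div_rpow hX hL.le, hLσ, hXσ, hsplit]
        field_simp

lemma integral_hadamardGreen_le (ha : 0 < a) (hab : a < b) (hσ : 1 < σ) (hx : x ∈ Icc a b) :
    ∫ τ in a..b, hadamardGreen a b σ x τ ≤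
      (σ - 1) ^ (σ - 1) * log (b / a) ^ σ / (σ ^ (σ + 1) * Gamma σ) := by
  have hσ0 : 0 < σ := by linarith
  have hx0 : 0 < x := ha.trans_le hx.1
  have hX : 0 ≤ log (x / a) := log_nonneg ((one_le_div ha).2 hx.1)
  have hsplit : log (b / x) = log (b / a) - log (x / a) := by
    rw [log_div (ha.trans hab).ne' hx0.ne', log_div (ha.trans hab).ne' ha.ne',
      log_div hx0.ne' ha.ne']
    ring
  have hamgm := rpow_mul_sub_le (sub_pos.2 hσ) hX
    (log_le_log (div_pos hx0 ha) (div_le_div_of_nonneg_right hx.2 ha.le))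
  rw [sub_add_cancel, ← hsplit, div_rpow (log_nonneg ((one_le_div ha).2 hab.le)) hσ0.le] at hamgm
  rw [integral_hadamardGreen ha hab hσ hx, rpow_add_one hσ0.ne']
  calc log (x / a) ^ (σ - 1) * log (b / x) / (σ * Gamma σ)
      ≤ (σ - 1) ^ (σ - 1) * (log (b / a) ^ σ / σ ^ σ) / (σ * Gamma σ) :=
        div_le_div_of_nonneg_right hamgm (by positivity)
    _ = (σ - 1) ^ (σ - 1) * log (b / a) ^ σ / (σ ^ σ * σ * Gamma σ) := by
        field_simp

end hadamardGreen

theorem stmt_10_general (a b σ lam : ℝ) (ha : 0 < a) (hab : a < b) (hσ1 : 1 < σ)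
    (hlam : |lam| < σ ^ (σ + 1) * Real.Gamma σ / ((σ - 1) ^ (σ - 1) * (Real.log (b / a)) ^ σ))
    (G : ℝ → ℝ → ℝ)
    (hG : ∀ x τ, G x τ =
      if τ ≤ x then
        (1 / Real.Gamma σ) *
          (((Real.log (x / a) / Real.log (b / a)) ^ (σ - 1) * (Real.log (b / τ)) ^ (σ - 1)
            - (Real.log (x / τ)) ^ (σ - 1)) / τ)
      else
        (1 / Real.Gamma σ) *
          ((Real.log (x / a) / Real.log (b / a)) ^ (σ - 1) * (Real.log (b / τ)) ^ (σ - 1) / τ))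
    (u : ℝ → ℝ) (hu : ContinuousOn u (Icc a b))
    (heq : ∀ x ∈ Icc a b, u x = lam * ∫ τ in a..b, G x τ * u τ) :
    ∀ x ∈ Icc a b, u x = 0 := by
  obtain rfl : G = hadamardGreen a b σ := funext fun x => funext (hG x)
  have hlamC : |lam| * ((σ - 1) ^ (σ - 1) * log (b / a) ^ σ / (σ ^ (σ + 1) * Gamma σ)) < 1 := by
    have hL : 0 < log (b / a) := log_pos ((one_lt_div ha).2 hab)
    have hσ' : 0 < σ - 1 := sub_pos.2 hσ1
    rw [← mul_div_assoc, div_lt_one (by positivity)]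
    exact (lt_div_iff₀ (by positivity)).1 hlam
  exact eq_zero_of_eq_mul_integral_kernel hab.le hu
    (fun x _ => ((continuousOn_hadamardGreen (ha.trans hab) hσ1).mono
      fun τ hτ => ha.trans_le hτ.1).intervalIntegrable_of_Icc hab.le)
    (fun x hx τ hτ => hadamardGreen_nonneg ha hab hσ1 hx hτ)
    (fun x hx => integral_hadamardGreen_le ha hab hσ1 hx) hlamC heq

theorem stmt_10 (a b σ lam : ℝ) (ha : 0 < a) (hab : a < b) (hσ1 : 1 < σ) (hσ2 : σ ≤ 2)
    (hlam : |lam| < σ ^ (σ + 1) * Real.Gamma σ / ((σ - 1) ^ (σ - 1) * (Real.log (b / a)) ^ σ))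
    (G : ℝ → ℝ → ℝ)
    (hG : ∀ x τ, G x τ =
      if τ ≤ x then
        (1 / Real.Gamma σ) *
          (((Real.log (x / a) / Real.log (b / a)) ^ (σ - 1) * (Real.log (b / τ)) ^ (σ - 1)
            - (Real.log (x / τ)) ^ (σ - 1)) / τ)
      else
        (1 / Real.Gamma σ) *
          ((Real.log (x / a) / Real.log (b / a)) ^ (σ - 1) * (Real.log (b / τ)) ^ (σ - 1) / τ))
    (u : ℝ → ℝ) (hu : ContinuousOn u (Icc a b))
    (heq : ∀ x ∈ Icc a b, u x = lam * ∫ τ in a..b, G x τ * u τ) :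
    ∀ x ∈ Icc a b, u x = 0 :=
  stmt_10_general a b σ lam ha hab hσ1 hlam G hG u hu heq
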